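/- arXiv:2506.13489 — 8 statements merged into one kernel-verified Lean document; each statement's English description precedes it below -/
import Mathlib

section
/- Let t ≥ n ≥ 2 be integers, let α ∈ (0,1], and let τ1, τ2 : ℕ×ℕ → [0,t) be integer-valued functions such that the t×n binary matrix M satisfies the Collision Bound Property P(M, α, τ1, τ2). Then M is an (n, 2α)-ultra-resilient superimposed code with elongation τ2; that is, for every 2 ≤ k ≤ n, every subset T of k column indices of M, every c_j ∈ T, and every z ∈ S∨(T∖{c_j}), one has |([c_j] ∧ z*)_{[0, τ2(n,k)]}| < 2α · |[c_j]_{[0, τ2(n,k)]}|. -/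
/-- The `i`-th cyclic shift (positions read mod `t`) of a binary vector of length `t`. -/
def cshift (t : ℕ) (x : ℕ → Bool) (i : ℤ) : ℕ → Bool :=
  fun r => x ((((r : ℤ) + i) % (t : ℤ)).toNat)

/-- The weight (number of ones) of `x` on bit positions in `[a, b]`. -/
def wt (x : ℕ → Bool) (a b : ℕ) : ℕ :=
  ((Finset.Icc a b).filter fun r => x r = true).card

/-- Bitwise AND of two binary vectors. -/
def vand (x y : ℕ → Bool) : ℕ → Bool := fun r => x r && y r

/-- The slipped vector `z* = z(−1) ∨ z ∨ z(1)`. -/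
def slip (t : ℕ) (z : ℕ → Bool) : ℕ → Bool :=
  fun r => cshift t z (-1) r || z r || cshift t z 1 r

/-- `z ∈ S∨(R)`, where `R` is the family of columns of `M` (a `t × n` binary matrix,
given by its columns) indexed by `T`: `z` is the bitwise OR of one cyclic shift of
each vector in `R`. -/
def memSupShift (t : ℕ) {n : ℕ} (M : Fin n → ℕ → Bool) (T : Finset (Fin n))
    (z : ℕ → Bool) : Prop :=
  ∃ σ : Fin n → ℤ, ∀ r : ℕ, z r = true ↔ ∃ j ∈ T, cshift t (M j) (σ j) r = true

/-- The Collision Bound Property `P(M, α, τ1, τ2)`: for every `1 < k ≤ n`, every pair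
of (distinct) column indices `j, j'` and every cyclic shift `0 ≤ i ≤ t−1`, both the
Weight Inequality and the Collision Weight Inequality hold. -/
def CollisionBoundProperty (t n : ℕ) (M : Fin n → ℕ → Bool) (α : ℝ)
    (τ1 τ2 : ℕ → ℕ → ℕ) : Prop :=
  ∀ k : ℕ, 1 < k → k ≤ n → ∀ j j' : Fin n, j ≠ j' → ∀ i : ℕ, i ≤ t - 1 →
    ((wt (M j) 0 (τ1 n k) : ℝ) ≤ α * (wt (M j) (τ1 n k) (τ2 n k) : ℝ)) ∧
    ((wt (vand (M j) (fun r =>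
        cshift t (M j') ((i : ℤ) - 1) r || cshift t (M j') (i : ℤ) r ||
          cshift t (M j') ((i : ℤ) + 1) r)) (τ1 n k) (τ2 n k) : ℤ)
      ≤ ⌊(α * (wt (M j) (τ1 n k) (τ2 n k) : ℝ) - 1) / ((k : ℝ) - 1)⌋)


lemma cshift_congr (t : ℕ) (x : ℕ → Bool) {a b : ℤ} (h : a % t = b % t) :
    cshift t x a = cshift t x b := by
  funext r
  unfold cshift
  rw [Int.add_emod, h, ← Int.add_emod]

lemma cshift_cshift (t : ℕ) (ht : 0 < t) (x : ℕ → Bool) (a b : ℤ) (r : ℕ) :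
    cshift t (cshift t x a) b r = cshift t x (a + b) r := by
  unfold cshift
  have h0 : (0:ℤ) < t := by exact_mod_cast ht
  have h1 : (((((r:ℤ) + b) % t).toNat : ℤ)) = ((r:ℤ) + b) % t :=
    Int.toNat_of_nonneg (Int.emod_nonneg _ (ne_of_gt h0))
  rw [h1, Int.add_emod (((r:ℤ)+b) % t) a, Int.emod_emod_of_dvd _ dvd_rfl, ← Int.add_emod]
  have h2 : (r:ℤ) + b + a = (r:ℤ) + (a + b) := by ring
  rw [h2]

lemma wt_mono {x y : ℕ → Bool} (a b : ℕ)
    (h : ∀ r, x r = true → y r = true) : wt x a b ≤ wt y a b := by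
  unfold wt
  apply Finset.card_le_card
  intro r hr
  simp only [Finset.mem_filter] at *
  exact ⟨hr.1, h r hr.2⟩

lemma wt_split (x : ℕ → Bool) (a b : ℕ) : wt x 0 b ≤ wt x 0 a + wt x a b := by
  unfold wt
  have hsub : (Finset.Icc 0 b).filter (fun r => x r = true)
      ⊆ (Finset.Icc 0 a).filter (fun r => x r = true)
        ∪ (Finset.Icc a b).filter (fun r => x r = true) := by
    intro r hr
    simp only [Finset.mem_filter, Finset.mem_union, Finset.mem_Icc] at *
    rcases le_or_gt r a with h | h
    · exact Or.inl ⟨⟨Nat.zero_le _, h⟩, hr.2⟩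
    · exact Or.inr ⟨⟨h.le, hr.1.2⟩, hr.2⟩
  exact le_trans (Finset.card_le_card hsub) (Finset.card_union_le _ _)

lemma wt_icc_mono (x : ℕ → Bool) (a b : ℕ) : wt x a b ≤ wt x 0 b := by
  unfold wt
  apply Finset.card_le_card
  intro r hr
  simp only [Finset.mem_filter, Finset.mem_Icc] at *
  exact ⟨⟨Nat.zero_le _, hr.1.2⟩, hr.2⟩

/-- If a `t × n` binary matrix `M` (with `t ≥ n ≥ 2`) satisfies the Collision Bound
Property `P(M, α, τ1, τ2)` for `α ∈ (0,1]` and functions `τ1, τ2 : ℕ×ℕ → [0,t)`, then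
`M` is an `(n, 2α)`-ultra-resilient superimposed code with elongation `τ2`. -/
theorem stmt0 (t n : ℕ) (hn : 2 ≤ n) (hnt : n ≤ t) (α : ℝ) (hα0 : 0 < α) (hα1 : α ≤ 1)
    (τ1 τ2 : ℕ → ℕ → ℕ) (hτ1 : ∀ a b : ℕ, τ1 a b < t) (hτ2 : ∀ a b : ℕ, τ2 a b < t)
    (M : Fin n → ℕ → Bool) (hCBP : CollisionBoundProperty t n M α τ1 τ2) :
    ∀ k : ℕ, 2 ≤ k → k ≤ n → ∀ T : Finset (Fin n), T.card = k → ∀ cj ∈ T,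
      ∀ z : ℕ → Bool, memSupShift t M (T.erase cj) z →
        (wt (vand (M cj) (slip t z)) 0 (τ2 n k) : ℝ)
          < 2 * α * (wt (M cj) 0 (τ2 n k) : ℝ) := by
  intro k hk2 hkn T hT cj hcj z hz
  obtain ⟨σ, hσ⟩ := hz
  have ht : 0 < t := by omega
  have hk1 : 1 < k := hk2
  set T' := T.erase cj with hT'def
  set τa := τ1 n k with hτa
  set τb := τ2 n k with hτb
  -- the "bad" union vector from each j'
  set B : Fin n → ℕ → Bool := fun j' r =>
    cshift t (M j') (σ j' - 1) r || cshift t (M j') (σ j') r ||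
      cshift t (M j') (σ j' + 1) r with hBdef
  -- pointwise claim
  have claim : ∀ r : ℕ, vand (M cj) (slip t z) r = true →
      M cj r = true ∧ ∃ j' ∈ T', B j' r = true := by
    intro r hr
    simp only [vand, Bool.and_eq_true] at hr
    refine ⟨hr.1, ?_⟩
    have hs := hr.2
    simp only [slip, Bool.or_eq_true] at hs
    rcases hs with (hs | hs) | hs
    · obtain ⟨j', hj', hc⟩ := (hσ ((((r:ℤ) + (-1)) % (t:ℤ)).toNat)).mp hs
      refine ⟨j', hj', ?_⟩
      have h2 : cshift t (M j') (σ j' + (-1)) r = true := by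
        rw [← cshift_cshift t ht (M j') (σ j') (-1) r]
        exact hc
      have h3 : σ j' + (-1) = σ j' - 1 := by ring
      rw [h3] at h2
      simp [hBdef, h2]
    · obtain ⟨j', hj', hc⟩ := (hσ r).mp hs
      exact ⟨j', hj', by simp [hBdef, hc]⟩
    · obtain ⟨j', hj', hc⟩ := (hσ ((((r:ℤ) + 1) % (t:ℤ)).toNat)).mp hs
      refine ⟨j', hj', ?_⟩
      have h2 : cshift t (M j') (σ j' + 1) r = true := by
        rw [← cshift_cshift t ht (M j') (σ j') 1 r]
        exact hc
      simp [hBdef, h2]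
  -- cardinality of T'
  have hT'card : T'.card = k - 1 := by
    rw [hT'def, Finset.card_erase_of_mem hcj, hT]
  have hT'ne : T'.Nonempty := by
    rw [← Finset.card_pos, hT'card]; omega
  -- weight inequality
  obtain ⟨j0, hj0⟩ := hT'ne
  have hne0 : cj ≠ j0 := (Finset.mem_erase.mp hj0).1.symm
  have hW1 : (wt (M cj) 0 τa : ℝ) ≤ α * (wt (M cj) τa τb : ℝ) :=
    (hCBP k hk1 hkn cj j0 hne0 0 (by omega)).1
  -- per-column collision bound
  have hstep : ∀ j' ∈ T', ((wt (vand (M cj) (B j')) τa τb : ℤ))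
      ≤ ⌊(α * (wt (M cj) τa τb : ℝ) - 1) / ((k : ℝ) - 1)⌋ := by
    intro j' hj'
    set i : ℕ := ((σ j') % (t:ℤ)).toNat with hidef
    have hi : (i : ℤ) = (σ j') % (t:ℤ) :=
      Int.toNat_of_nonneg (Int.emod_nonneg _ (by exact_mod_cast ht.ne'))
    have hilt : ((σ j') % (t:ℤ)) < (t:ℤ) := Int.emod_lt_of_pos _ (by exact_mod_cast ht)
    have hile : i ≤ t - 1 := by omega
    have hne : cj ≠ j' := (Finset.mem_erase.mp hj').1.symm
    have hcbp := (hCBP k hk1 hkn cj j' hne i hile).2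
    have hmod : ((i:ℤ)) % (t:ℤ) = (σ j') % (t:ℤ) := by
      rw [hi, Int.emod_emod_of_dvd _ dvd_rfl]
    have e1 : cshift t (M j') ((i:ℤ) - 1) = cshift t (M j') (σ j' - 1) :=
      cshift_congr t _ (by rw [Int.sub_emod, hmod, ← Int.sub_emod])
    have e2 : cshift t (M j') ((i:ℤ)) = cshift t (M j') (σ j') :=
      cshift_congr t _ hmod
    have e3 : cshift t (M j') ((i:ℤ) + 1) = cshift t (M j') (σ j' + 1) :=
      cshift_congr t _ (by rw [Int.add_emod, hmod, ← Int.add_emod])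
    have hfun : (fun r => cshift t (M j') ((i:ℤ) - 1) r || cshift t (M j') (i:ℤ) r ||
        cshift t (M j') ((i:ℤ) + 1) r) = B j' := by
      funext r
      rw [e1, e2, e3]
    rw [hfun] at hcbp
    exact hcbp
  -- sum bound
  have hsub : wt (vand (M cj) (slip t z)) τa τb ≤
      ∑ j' ∈ T', wt (vand (M cj) (B j')) τa τb := by
    unfold wt
    refine le_trans (Finset.card_le_card ?_) (Finset.card_biUnion_le)
    intro r hr
    simp only [Finset.mem_filter] at hr
    obtain ⟨hmem, hval⟩ := hr
    obtain ⟨h1, j', hj', hB⟩ := claim r hval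
    exact Finset.mem_biUnion.mpr ⟨j', hj',
      Finset.mem_filter.mpr ⟨hmem, by simp [vand, h1, hB]⟩⟩
  have hsum : (∑ j' ∈ T', (wt (vand (M cj) (B j')) τa τb : ℤ))
      ≤ (T'.card : ℤ) * ⌊(α * (wt (M cj) τa τb : ℝ) - 1) / ((k : ℝ) - 1)⌋ := by
    calc (∑ j' ∈ T', (wt (vand (M cj) (B j')) τa τb : ℤ))
        ≤ T'.card • ⌊(α * (wt (M cj) τa τb : ℝ) - 1) / ((k : ℝ) - 1)⌋ :=
          Finset.sum_le_card_nsmul _ _ _ hstep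
      _ = (T'.card : ℤ) * _ := by rw [nsmul_eq_mul]
  -- real arithmetic
  set W : ℕ := wt (M cj) τa τb with hW
  set A1 : ℕ := wt (vand (M cj) (slip t z)) τa τb with hA1
  have hkR : ((k:ℝ) - 1) > 0 := by
    have : (2:ℝ) ≤ (k:ℝ) := by exact_mod_cast hk2
    linarith
  have hA1R : (A1 : ℝ) ≤ α * (W : ℝ) - 1 := by
    have hfl : (⌊(α * (W : ℝ) - 1) / ((k : ℝ) - 1)⌋ : ℝ)
        ≤ (α * (W : ℝ) - 1) / ((k : ℝ) - 1) := Int.floor_le _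
    have h1 : (A1 : ℤ) ≤ (T'.card : ℤ) * ⌊(α * (W : ℝ) - 1) / ((k : ℝ) - 1)⌋ := by
      calc (A1 : ℤ) ≤ (∑ j' ∈ T', (wt (vand (M cj) (B j')) τa τb : ℤ)) := by
            have := hsub
            push_cast
            exact_mod_cast this
        _ ≤ _ := hsum
    have h2 : (A1 : ℝ) ≤ (T'.card : ℝ) * (⌊(α * (W : ℝ) - 1) / ((k : ℝ) - 1)⌋ : ℝ) := by
      exact_mod_cast h1
    have hcard : (T'.card : ℝ) = (k : ℝ) - 1 := by
      rw [hT'card]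
      push_cast [Nat.cast_sub (by omega : 1 ≤ k)]
      ring
    rw [hcard] at h2
    have h3 : ((k:ℝ) - 1) * (⌊(α * (W : ℝ) - 1) / ((k : ℝ) - 1)⌋ : ℝ)
        ≤ ((k:ℝ) - 1) * ((α * (W : ℝ) - 1) / ((k : ℝ) - 1)) :=
      mul_le_mul_of_nonneg_left hfl hkR.le
    have h4 : ((k:ℝ) - 1) * ((α * (W : ℝ) - 1) / ((k : ℝ) - 1)) = α * (W : ℝ) - 1 := by
      field_simp
    linarith
  have hsplit : wt (vand (M cj) (slip t z)) 0 τb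
      ≤ wt (vand (M cj) (slip t z)) 0 τa + A1 := wt_split _ _ _
  have hmono0 : wt (vand (M cj) (slip t z)) 0 τa ≤ wt (M cj) 0 τa :=
    wt_mono _ _ (fun r hr => by
      simp only [vand, Bool.and_eq_true] at hr; exact hr.1)
  have hWmono : (W : ℝ) ≤ (wt (M cj) 0 τb : ℝ) := by
    exact_mod_cast wt_icc_mono (M cj) τa τb
  have hαW : α * (W : ℝ) ≤ α * (wt (M cj) 0 τb : ℝ) :=
    mul_le_mul_of_nonneg_left hWmono hα0.le
  have hsplitR : (wt (vand (M cj) (slip t z)) 0 τb : ℝ)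
      ≤ (wt (vand (M cj) (slip t z)) 0 τa : ℝ) + (A1 : ℝ) := by exact_mod_cast hsplit
  have hmono0R : (wt (vand (M cj) (slip t z)) 0 τa : ℝ) ≤ (wt (M cj) 0 τa : ℝ) := by
    exact_mod_cast hmono0
  linarith
end

section
/- Let t ≥ n ≥ 2 be integers, α ∈ (0,1], 1 < k ≤ n, and let M be a t×n binary matrix whose columns satisfy the Collision Weight Inequality: for every pair of column indices c_j, c_{j'} and every shift 0 ≤ i ≤ t−1, |([c_j] ∧ ([c_{j'}](i−1) ∨ [c_{j'}](i) ∨ [c_{j'}](i+1)))_{[τ1, τ2]}| ≤ ⌊(α·|[c_j]_{[τ1, τ2]}| − 1)/(k−1)⌋, where 0 ≤ τ1 ≤ τ2 < t are given integers. Then for any k distinct column indices c_j, c_{m_1},…,c_{m_{k−1}} and any shifts i_1,…,i_{k−1}, the number of positions r with τ1 ≤ r ≤ τ2 such that [c_j] has a 1 at position r while every [c_{m_l}](i_l) (1 ≤ l ≤ k−1) has a 0 at position r is strictly greater than (1−α)·|[c_j]_{[τ1, τ2]}|. -/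

lemma cshift_emod (t : ℕ) (ht : 0 < t) (x : ℕ → Bool) (σ : ℤ) (r : ℕ) :
    cshift t x (σ % (t : ℤ)) r = cshift t x σ r := by
  unfold cshift
  congr 2
  rw [Int.add_emod, Int.emod_emod_of_dvd _ dvd_rfl, ← Int.add_emod]

/-- If the columns of a `t × n` binary matrix satisfy the Collision Weight Inequality
on `[τ1, τ2]`, then for any `k` distinct column indices `c_j, c_{m_1}, …, c_{m_{k−1}}`
and any shifts `i_1, …, i_{k−1}`, the number of positions `r ∈ [τ1, τ2]` where `[c_j]`
has a `1` and every `[c_{m_l}](i_l)` has a `0` is strictly greater than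
`(1−α)·|[c_j]_{[τ1,τ2]}|`. -/
theorem stmt2 (t n : ℕ) (hn : 2 ≤ n) (hnt : n ≤ t) (α : ℝ) (hα0 : 0 < α) (hα1 : α ≤ 1)
    (k : ℕ) (hk1 : 1 < k) (hkn : k ≤ n) (M : Fin n → ℕ → Bool)
    (τ1 τ2 : ℕ) (hτ12 : τ1 ≤ τ2) (hτ2t : τ2 < t)
    (hCWI : ∀ j j' : Fin n, j ≠ j' → ∀ i : ℕ, i ≤ t - 1 →
      ((wt (vand (M j) (fun r =>
          cshift t (M j') ((i : ℤ) - 1) r || cshift t (M j') (i : ℤ) r ||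
            cshift t (M j') ((i : ℤ) + 1) r)) τ1 τ2 : ℤ)
        ≤ ⌊(α * (wt (M j) τ1 τ2 : ℝ) - 1) / ((k : ℝ) - 1)⌋)) :
    ∀ cj : Fin n, ∀ m : Fin (k - 1) → Fin n, Function.Injective m →
      (∀ l, m l ≠ cj) → ∀ σ : Fin (k - 1) → ℤ,
        (1 - α) * (wt (M cj) τ1 τ2 : ℝ)
          < (((Finset.Icc τ1 τ2).filter fun r =>
              M cj r = true ∧ ∀ l : Fin (k - 1), cshift t (M (m l)) (σ l) r = false).card : ℝ)  := by
  intro cj m hinj hne σ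
  have ht : 0 < t := by omega
  set w : ℕ := wt (M cj) τ1 τ2 with hw
  set G : Finset ℕ := (Finset.Icc τ1 τ2).filter fun r =>
      M cj r = true ∧ ∀ l : Fin (k - 1), cshift t (M (m l)) (σ l) r = false with hG
  set B : Fin (k - 1) → Finset ℕ := fun l => (Finset.Icc τ1 τ2).filter fun r =>
      M cj r = true ∧ cshift t (M (m l)) (σ l) r = true with hB
  -- each B l is bounded
  have hBbound : ∀ l, ((B l).card : ℝ) ≤ (α * (w : ℝ) - 1) / ((k : ℝ) - 1) := by
    intro l
    set i : ℕ := ((σ l) % (t : ℤ)).toNat with hi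
    have htz : (0 : ℤ) < (t : ℤ) := by exact_mod_cast ht
    have hemod_nonneg : 0 ≤ (σ l) % (t : ℤ) := Int.emod_nonneg _ (by positivity)
    have hemod_lt : (σ l) % (t : ℤ) < (t : ℤ) := Int.emod_lt_of_pos _ htz
    have hicast : (i : ℤ) = (σ l) % (t : ℤ) := Int.toNat_of_nonneg hemod_nonneg
    have hCW := hCWI cj (m l) (Ne.symm (hne l)) i ?_
    · have hsub : B l ⊆ (Finset.Icc τ1 τ2).filter fun r =>
          vand (M cj) (fun r =>
            cshift t (M (m l)) ((i : ℤ) - 1) r || cshift t (M (m l)) ((i : ℤ)) r ||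
              cshift t (M (m l)) ((i : ℤ) + 1) r) r = true := by
        intro r hr
        simp only [hB, Finset.mem_filter] at hr
        obtain ⟨hr1, hr2, hr3⟩ := hr
        have hmid : cshift t (M (m l)) ((i : ℤ)) r = true := by
          rw [hicast, cshift_emod t ht]; exact hr3
        simp [Finset.mem_filter, hr1, vand, hr2, hmid]
      have hcard : (B l).card ≤ wt (vand (M cj) (fun r =>
            cshift t (M (m l)) ((i : ℤ) - 1) r || cshift t (M (m l)) ((i : ℤ)) r ||
              cshift t (M (m l)) ((i : ℤ) + 1) r)) τ1 τ2 :=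
        Finset.card_le_card hsub
      have h1 : ((B l).card : ℤ) ≤ ⌊(α * (w : ℝ) - 1) / ((k : ℝ) - 1)⌋ := by
        exact le_trans (by exact_mod_cast hcard) hCW
      calc ((B l).card : ℝ) ≤ (⌊(α * (w : ℝ) - 1) / ((k : ℝ) - 1)⌋ : ℝ) := by exact_mod_cast h1
        _ ≤ (α * (w : ℝ) - 1) / ((k : ℝ) - 1) := Int.floor_le _
    · -- i ≤ t - 1
      have : (i : ℤ) < (t : ℤ) := by rw [hicast]; exact hemod_lt
      have : i < t := by exact_mod_cast this
      omega
  -- covering: w ≤ G.card + ∑ B l.card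
  have hcover : w ≤ G.card + ∑ l, (B l).card := by
    have hsub : ((Finset.Icc τ1 τ2).filter fun r => M cj r = true) ⊆
        G ∪ Finset.univ.biUnion B := by
      intro r hr
      simp only [Finset.mem_filter] at hr
      by_cases hall : ∀ l : Fin (k-1), cshift t (M (m l)) (σ l) r = false
      · exact Finset.mem_union_left _ (by simp [hG, Finset.mem_filter, hr.1, hr.2, hall])
      · push_neg at hall
        obtain ⟨l, hl⟩ := hall
        have hl' : cshift t (M (m l)) (σ l) r = true := by
          cases h : cshift t (M (m l)) (σ l) r
          · exact absurd h hl
          · rfl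
        exact Finset.mem_union_right _ (Finset.mem_biUnion.2 ⟨l, Finset.mem_univ _,
          by simp [hB, Finset.mem_filter, hr.1, hr.2, hl']⟩)
    calc w = ((Finset.Icc τ1 τ2).filter fun r => M cj r = true).card := rfl
      _ ≤ (G ∪ Finset.univ.biUnion B).card := Finset.card_le_card hsub
      _ ≤ G.card + (Finset.univ.biUnion B).card := Finset.card_union_le _ _
      _ ≤ G.card + ∑ l, (B l).card := by
          gcongr
          exact Finset.card_biUnion_le
  -- real arithmetic
  have hk1R : (1 : ℝ) < (k : ℝ) := by exact_mod_cast hk1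
  have hkpos : (0 : ℝ) < (k : ℝ) - 1 := by linarith
  have hsum : ((∑ l, (B l).card : ℕ) : ℝ) ≤ α * (w : ℝ) - 1 := by
    push_cast
    calc (∑ l, ((B l).card : ℝ)) ≤ ∑ _l : Fin (k-1), (α * (w : ℝ) - 1) / ((k : ℝ) - 1) :=
          Finset.sum_le_sum fun l _ => hBbound l
      _ = ((k - 1 : ℕ) : ℝ) * ((α * (w : ℝ) - 1) / ((k : ℝ) - 1)) := by
          rw [Finset.sum_const, Finset.card_univ, Fintype.card_fin, nsmul_eq_mul]
      _ = (α * (w : ℝ) - 1) := by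
          rw [Nat.cast_sub (le_of_lt hk1)]
          push_cast
          field_simp
  have hcoverR : (w : ℝ) ≤ (G.card : ℝ) + ((∑ l, (B l).card : ℕ) : ℝ) := by
    exact_mod_cast hcover
  have : (1 - α) * (w : ℝ) < (G.card : ℝ) := by nlinarith
  exact this
end

section
/- For all integers h1, h2 with 1 < h1 < h2, one has ∑_{i=h1+1}^{h2+1} 1/√(i·(i−h1)) < 3 + ln(h2+1) − ln(h1+1). -/
/-- Per-term bound: for `0 < h` and `1 ≤ j`,
`1/√(j(j+h)) ≤ 2(ln(√j+√(j+h)) − ln(√(j−1)+√(j−1+h)))`. -/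
lemma stmt7_key (h j : ℝ) (hh : 0 < h) (hj : 1 ≤ j) :
    1 / Real.sqrt (j * (j + h)) ≤
      2 * (Real.log (Real.sqrt j + Real.sqrt (j + h)) -
           Real.log (Real.sqrt (j - 1) + Real.sqrt (j - 1 + h))) := by
  set sa := Real.sqrt j with hsa
  set sb := Real.sqrt (j + h) with hsb
  set sc := Real.sqrt (j - 1) with hsc
  set sd := Real.sqrt (j - 1 + h) with hsd
  have hj0 : (0:ℝ) ≤ j := by linarith
  have ha2 : sa ^ 2 = j := Real.sq_sqrt hj0
  have hb2 : sb ^ 2 = j + h := Real.sq_sqrt (by linarith)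
  have hc2 : sc ^ 2 = j - 1 := Real.sq_sqrt (by linarith)
  have hd2 : sd ^ 2 = j - 1 + h := Real.sq_sqrt (by linarith)
  have ha1 : 1 ≤ sa := by
    rw [hsa, show (1:ℝ) = Real.sqrt 1 by simp]
    exact Real.sqrt_le_sqrt hj
  have hb0 : 0 < sb := Real.sqrt_pos.mpr (by linarith)
  have hc0 : 0 ≤ sc := Real.sqrt_nonneg _
  have hd0 : 0 < sd := Real.sqrt_pos.mpr (by linarith)
  have hca : sc ≤ sa := Real.sqrt_le_sqrt (by linarith)
  have hdb : sd ≤ sb := Real.sqrt_le_sqrt (by linarith)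
  have hA : (0:ℝ) < sa + sb := by linarith
  have hB : (0:ℝ) < sc + sd := by linarith
  have hlog : 1 - (sc + sd) / (sa + sb) ≤
      Real.log (sa + sb) - Real.log (sc + sd) := by
    have h1 := Real.log_le_sub_one_of_pos (div_pos hB hA)
    rw [Real.log_div hB.ne' hA.ne'] at h1
    linarith
  have hsqrt : Real.sqrt (j * (j + h)) = sa * sb := Real.sqrt_mul hj0 _
  have e1 : 1 ≤ (sa - sc) * (2 * sa) := by nlinarith [sq_nonneg (sa - sc)]
  have e2 : 1 ≤ (sb - sd) * (2 * sb) := by nlinarith [sq_nonneg (sb - sd)]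
  have key : 1 / (sa * sb) ≤ 2 * (1 - (sc + sd) / (sa + sb)) := by
    rw [div_le_iff₀ (by positivity)]
    have h3 : 1 - (sc + sd) / (sa + sb) = ((sa + sb) - (sc + sd)) / (sa + sb) := by
      field_simp
    rw [h3, ← sub_nonneg]
    have h4 : 2 * (((sa + sb) - (sc + sd)) / (sa + sb)) * (sa * sb) - 1 =
        (sb * ((sa - sc) * (2 * sa) - 1) + sa * ((sb - sd) * (2 * sb) - 1)) / (sa + sb) := by
      field_simp
      ring
    rw [h4]
    have h5 : 0 ≤ sb * ((sa - sc) * (2 * sa) - 1) := by nlinarith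
    have h6 : 0 ≤ sa * ((sb - sd) * (2 * sb) - 1) := by nlinarith
    positivity
  calc 1 / Real.sqrt (j * (j + h)) = 1 / (sa * sb) := by rw [hsqrt]
    _ ≤ 2 * (1 - (sc + sd) / (sa + sb)) := key
    _ ≤ 2 * (Real.log (sa + sb) - Real.log (sc + sd)) := by linarith

/-- For integers `1 < h1 < h2`,
`∑_{i=h1+1}^{h2+1} 1/√(i·(i−h1)) < 3 + ln(h2+1) − ln(h1+1)`. -/
theorem stmt7 (h1 h2 : ℕ) (hh1 : 1 < h1) (hh2 : h1 < h2) :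
    ∑ i ∈ Finset.Icc (h1 + 1) (h2 + 1), 1 / Real.sqrt ((i : ℝ) * ((i : ℝ) - (h1 : ℝ)))
      < 3 + Real.log ((h2 : ℝ) + 1) - Real.log ((h1 : ℝ) + 1) := by
  set N := h2 + 1 - h1 with hN
  have hNval : (N : ℝ) = (h2 : ℝ) + 1 - h1 := by
    have : h1 ≤ h2 + 1 := by omega
    push_cast [hN, this]
    ring
  set g : ℕ → ℝ := fun k => 2 * Real.log (Real.sqrt k + Real.sqrt ((k : ℝ) + h1)) with hg
  -- reindex the sum
  have hre : ∑ i ∈ Finset.Icc (h1 + 1) (h2 + 1),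
      1 / Real.sqrt ((i : ℝ) * ((i : ℝ) - (h1 : ℝ)))
      = ∑ k ∈ Finset.range N,
        1 / Real.sqrt (((h1 + 1 + k : ℕ) : ℝ) * (((h1 + 1 + k : ℕ) : ℝ) - (h1 : ℝ))) := by
    rw [← Finset.Ico_add_one_right_eq_Icc, Finset.sum_Ico_eq_sum_range]
    have hsz : h2 + 1 + 1 - (h1 + 1) = N := by omega
    rw [hsz]
  have hbound : ∑ k ∈ Finset.range N,
      1 / Real.sqrt (((h1 + 1 + k : ℕ) : ℝ) * (((h1 + 1 + k : ℕ) : ℝ) - (h1 : ℝ)))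
      ≤ g N - g 0 := by
    rw [← Finset.sum_range_sub g N]
    apply Finset.sum_le_sum
    intro k _
    have hkey := stmt7_key (h1 : ℝ) ((k : ℝ) + 1) (by positivity)
      (by have := Nat.cast_nonneg (α := ℝ) k; linarith)
    have h1' : ((h1 + 1 + k : ℕ) : ℝ) * (((h1 + 1 + k : ℕ) : ℝ) - (h1 : ℝ))
        = ((k : ℝ) + 1) * (((k : ℝ) + 1) + h1) := by push_cast; ring
    rw [h1']
    have hgk : g (k + 1) - g k = 2 * (Real.log (Real.sqrt ((k : ℝ) + 1) +
        Real.sqrt (((k : ℝ) + 1) + h1)) -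
        Real.log (Real.sqrt (((k : ℝ) + 1) - 1) + Real.sqrt (((k : ℝ) + 1) - 1 + h1))) := by
      simp only [hg]
      push_cast
      ring_nf
    rw [hgk]
    convert hkey using 4 <;> push_cast <;> ring
  -- now final estimate
  have hg0 : g 0 = Real.log (h1 : ℝ) := by
    simp only [hg]
    norm_num
    rw [Real.log_sqrt (by positivity)]
    ring
  have hh2p : (0:ℝ) < (h2 : ℝ) + 1 := by positivity
  have hgN : g N ≤ 2 * Real.log (2 * Real.sqrt ((h2 : ℝ) + 1)) := by
    simp only [hg]
    have hNh : (N : ℝ) + h1 = (h2 : ℝ) + 1 := by rw [hNval]; ring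
    rw [hNh]
    have hle : Real.sqrt (N : ℝ) ≤ Real.sqrt ((h2 : ℝ) + 1) := by
      apply Real.sqrt_le_sqrt
      rw [hNval]
      have : (1:ℝ) ≤ (h1 : ℝ) := by exact_mod_cast hh1.le
      linarith
    have hpos : 0 < Real.sqrt ((h2 : ℝ) + 1) := Real.sqrt_pos.mpr hh2p
    have : Real.sqrt (N : ℝ) + Real.sqrt ((h2 : ℝ) + 1) ≤ 2 * Real.sqrt ((h2 : ℝ) + 1) := by
      linarith
    have hlog := Real.log_le_log (by positivity) this
    linarith
  have h2sq : 2 * Real.log (Real.sqrt ((h2 : ℝ) + 1)) = Real.log ((h2 : ℝ) + 1) := by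
    rw [Real.log_sqrt hh2p.le]
    ring
  have hgN' : g N ≤ 2 * Real.log 2 + Real.log ((h2 : ℝ) + 1) := by
    rw [Real.log_mul (by norm_num) (Real.sqrt_pos.mpr hh2p).ne'] at hgN
    linarith
  -- log(h1+1) ≤ log h1 + log (3/2)
  have hh1p : (0:ℝ) < (h1 : ℝ) := by positivity
  have hh1r : (2:ℝ) ≤ (h1 : ℝ) := by exact_mod_cast hh1
  have hlog32 : Real.log ((h1 : ℝ) + 1) - Real.log (h1 : ℝ) ≤ Real.log (3/2) := by
    rw [← Real.log_div (by positivity) hh1p.ne']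
    apply Real.log_le_log (by positivity)
    rw [div_le_div_iff₀ hh1p (by norm_num)]
    linarith
  have hln6 : 2 * Real.log 2 + Real.log (3/2) < 3 := by
    have h6 : 2 * Real.log 2 + Real.log (3/2) = Real.log 6 := by
      rw [show (6:ℝ) = 2 * 2 * (3/2) by norm_num, Real.log_mul (by norm_num) (by norm_num),
        Real.log_mul (by norm_num) (by norm_num)]
      ring
    rw [h6]
    rw [show (3:ℝ) = Real.log (Real.exp 3) by rw [Real.log_exp]]
    apply Real.log_lt_log (by norm_num)
    have he := Real.exp_one_gt_d9
    have : Real.exp 3 = Real.exp 1 * Real.exp 1 * Real.exp 1 := by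
      rw [← Real.exp_add, ← Real.exp_add]; norm_num
    nlinarith
  rw [hre]
  calc ∑ k ∈ Finset.range N,
      1 / Real.sqrt (((h1 + 1 + k : ℕ) : ℝ) * (((h1 + 1 + k : ℕ) : ℝ) - (h1 : ℝ)))
      ≤ g N - g 0 := hbound
    _ ≤ 2 * Real.log 2 + Real.log ((h2 : ℝ) + 1) - Real.log (h1 : ℝ) := by
        rw [hg0]; linarith
    _ < 3 + Real.log ((h2 : ℝ) + 1) - Real.log ((h1 : ℝ) + 1) := by linarith
end

section
/- Fix a positive integer L and define p(r) = 1/√(⌊r/L⌋+1) for integers r ≥ 0. Let k ≥ 1 be an integer, α ∈ (0,1], ε > 0, and c > 0 be such that m1 := (c/64)k² and m2 := (c/α^{2+ε})k² are positive integers. If q is a real-valued function on the positions r with m1·L ≤ r < (m2+1)·L satisfying q(r) > (α^{1+ε/2}/(√c·k))·ln(4/α) for every such r, then ∑_{r=m1·L}^{(m2+1)·L − 1} p(r)·q(r) > (L·ln(4/α))/2. -/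
/-!
On the segment every position lies in a block `b ≤ m₂`, so `p(r) ≥ 1/√(m₂+1)`. Since
`c k² = α^{2+ε} m₂`, the threshold on `q` is exactly `ln(4/α)/√m₂`, and the segment has
`(m₂+1-m₁)L` positions with `2m₁ ≤ m₂`. Hence the sum exceeds
`(m₂+1-m₁) L ln(4/α) / √(m₂(m₂+1))`, which is at least `L ln(4/α)/2` because
`√(m₂(m₂+1)) ≤ m₂+1 ≤ 2(m₂+1-m₁)`.
-/

/-- Probability of a one at position `r` in the random matrix construction with block
length `L`: `p(r) = 1/√(⌊r/L⌋+1)` (natural-number division is floor division). -/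
noncomputable def pval (L r : ℕ) : ℝ := 1 / Real.sqrt (((r / L : ℕ) : ℝ) + 1)

open Finset Real

lemma pval_pos (L r : ℕ) : 0 < pval L r := by
  unfold pval; positivity

lemma one_div_sqrt_succ_le_pval {L m r : ℕ} (hL : 0 < L) (hr : r < (m + 1) * L) :
    1 / √((m : ℝ) + 1) ≤ pval L r := by
  have hblock : r / L ≤ m := Nat.lt_succ_iff.mp ((Nat.div_lt_iff_lt_mul hL).mpr hr)
  unfold pval
  gcongr

lemma sqrt_mul_sqrt_succ_le (x : ℝ) (hx : 0 ≤ x) : √x * √(x + 1) ≤ x + 1 := by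
  calc √x * √(x + 1) ≤ √(x + 1) * √(x + 1) := by gcongr; linarith
    _ = x + 1 := mul_self_sqrt (by linarith)

lemma card_mul_lt_sum_pval_mul {L a m : ℕ} (hL : 0 < L) (ham : a ≤ m) {β : ℝ} (hβ : 0 ≤ β)
    {q : ℕ → ℝ} (hq : ∀ r, a * L ≤ r → r < (m + 1) * L → β < q r) :
    ((m : ℝ) + 1 - a) * L * (β / √((m : ℝ) + 1))
      < ∑ r ∈ Ico (a * L) ((m + 1) * L), pval L r * q r := by
  have hcard : ((#(Ico (a * L) ((m + 1) * L)) : ℕ) : ℝ) = ((m : ℝ) + 1 - a) * L := by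
    rw [Nat.card_Ico, Nat.cast_sub (Nat.mul_le_mul_right L (Nat.le_succ_of_le ham))]
    push_cast; ring
  have hne : (Ico (a * L) ((m + 1) * L)).Nonempty :=
    nonempty_Ico.mpr ((Nat.mul_lt_mul_right hL).mpr (Nat.lt_succ_of_le ham))
  have hterm : ∀ r ∈ Ico (a * L) ((m + 1) * L), β / √((m : ℝ) + 1) < pval L r * q r := by
    intro r hr
    obtain ⟨hr₁, hr₂⟩ := mem_Ico.mp hr
    calc β / √((m : ℝ) + 1) = 1 / √((m : ℝ) + 1) * β := by ring
      _ ≤ pval L r * β := by gcongr; exact one_div_sqrt_succ_le_pval hL hr₂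
      _ < pval L r * q r := mul_lt_mul_of_pos_left (hq r hr₁ hr₂) (pval_pos L r)
  have hsum := sum_lt_sum_of_nonempty hne hterm
  rwa [sum_const, nsmul_eq_mul, hcard] at hsum

lemma half_mul_lt_sum_pval_mul {L a m : ℕ} (hL : 0 < L) (hm : 0 < m) (ham : 2 * a ≤ m)
    {T : ℝ} (hT : 0 ≤ T) {q : ℕ → ℝ}
    (hq : ∀ r, a * L ≤ r → r < (m + 1) * L → T / √(m : ℝ) < q r) :
    (L : ℝ) * T / 2 < ∑ r ∈ Ico (a * L) ((m + 1) * L), pval L r * q r := by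
  refine lt_of_le_of_lt ?_ (card_mul_lt_sum_pval_mul hL (by omega) (by positivity) hq)
  have hm' : (0 : ℝ) < m := by exact_mod_cast hm
  have ham' : 2 * (a : ℝ) ≤ m := by exact_mod_cast ham
  have hroots : √(m : ℝ) * √((m : ℝ) + 1) ≤ 2 * ((m : ℝ) + 1 - a) :=
    (sqrt_mul_sqrt_succ_le m hm'.le).trans (by linarith)
  have hpos : 0 < √(m : ℝ) * √((m : ℝ) + 1) := by positivity
  calc (L : ℝ) * T / 2 = L * T / 2 * (√(m : ℝ) * √((m : ℝ) + 1)) / (√m * √(m + 1)) := by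
        field_simp
    _ ≤ L * T / 2 * (2 * ((m : ℝ) + 1 - a)) / (√m * √(m + 1)) := by gcongr
    _ = ((m : ℝ) + 1 - a) * L * (T / √(m : ℝ) / √((m : ℝ) + 1)) := by
        field_simp

lemma sqrt_rpow_two_add {α : ℝ} (hα : 0 < α) (ε : ℝ) :
    √(α ^ ((2 : ℝ) + ε)) = α ^ ((1 : ℝ) + ε / 2) := by
  rw [sqrt_eq_rpow, ← rpow_mul hα.le]
  ring_nf

theorem stmt8_general (L : ℕ) (hL : 0 < L) (k : ℕ) (α ε c : ℝ)
    (hα0 : 0 < α) (hα1 : α ≤ 1) (hε : 0 < ε)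
    (m1 m2 : ℕ) (hm2 : 0 < m2)
    (hm1c : (m1 : ℝ) = c / 64 * (k : ℝ) ^ 2)
    (hm2c : (m2 : ℝ) = c / α ^ ((2 : ℝ) + ε) * (k : ℝ) ^ 2)
    (q : ℕ → ℝ)
    (hq : ∀ r : ℕ, m1 * L ≤ r → r < (m2 + 1) * L →
      α ^ ((1 : ℝ) + ε / 2) / (Real.sqrt c * (k : ℝ)) * Real.log (4 / α) < q r) :
    (L : ℝ) * Real.log (4 / α) / 2
      < ∑ r ∈ Finset.Ico (m1 * L) ((m2 + 1) * L), pval L r * q r := by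
  set γ := α ^ ((2 : ℝ) + ε)
  have hγ0 : 0 < γ := rpow_pos_of_pos hα0 _
  have hγ1 : γ ≤ 1 := rpow_le_one hα0.le hα1 (by linarith)
  have hck : c * (k : ℝ) ^ 2 = γ * m2 := by
    rw [hm2c]; field_simp
  have h2m1 : 2 * m1 ≤ m2 := by
    have : 2 * (m1 : ℝ) ≤ m2 := by
      nlinarith [(Nat.cast_nonneg m2 : (0 : ℝ) ≤ m2)]
    exact_mod_cast this
  have hsqrt : √c * k = α ^ ((1 : ℝ) + ε / 2) * √(m2 : ℝ) := by
    rw [← sqrt_rpow_two_add hα0, ← sqrt_mul hγ0.le, ← hck, sqrt_mul' _ (by positivity),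
      sqrt_sq (Nat.cast_nonneg k)]
  have hthreshold : α ^ ((1 : ℝ) + ε / 2) / (√c * k) * log (4 / α) = log (4 / α) / √(m2 : ℝ) := by
    rw [hsqrt]
    field_simp [(rpow_pos_of_pos hα0 ((1 : ℝ) + ε / 2)).ne']
  have hlog : 0 ≤ log (4 / α) := log_nonneg (by rw [le_div_iff₀ hα0]; linarith)
  exact half_mul_lt_sum_pval_mul hL hm2 h2m1 hlog (fun r h₁ h₂ => hthreshold ▸ hq r h₁ h₂)

/-- Case 1 lower bound: if `q(r) > (α^{1+ε/2}/(√c·k))·ln(4/α)` on all positions of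
the lower segment `[m1·L, (m2+1)·L)`, then `∑ p(r)·q(r) > L·ln(4/α)/2`. -/
theorem stmt8 (L : ℕ) (hL : 0 < L) (k : ℕ) (hk : 1 ≤ k) (α ε c : ℝ)
    (hα0 : 0 < α) (hα1 : α ≤ 1) (hε : 0 < ε) (hc : 0 < c)
    (m1 m2 : ℕ) (hm1 : 0 < m1) (hm2 : 0 < m2)
    (hm1c : (m1 : ℝ) = c / 64 * (k : ℝ) ^ 2)
    (hm2c : (m2 : ℝ) = c / α ^ ((2 : ℝ) + ε) * (k : ℝ) ^ 2)
    (q : ℕ → ℝ)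
    (hq : ∀ r : ℕ, m1 * L ≤ r → r < (m2 + 1) * L →
      α ^ ((1 : ℝ) + ε / 2) / (Real.sqrt c * (k : ℝ)) * Real.log (4 / α) < q r) :
    (L : ℝ) * Real.log (4 / α) / 2
      < ∑ r ∈ Finset.Ico (m1 * L) ((m2 + 1) * L), pval L r * q r :=
  stmt8_general L hL k α ε c hα0 hα1 hε m1 m2 hm2 hm1c hm2c q hq
end

section
/- Fix a positive integer L and define p(r) = 1/√(⌊r/L⌋+1) for integers r ≥ 0. Let m1 < m2 be positive integers and let t be an integer with t > (m2+1)·L. Then for every integer shift s, ∑_{r=m1·L}^{(m2+1)·L − 1} p(r)·p((r+s) mod t) < L·(3 + ln(m2+1) − ln(m1+1)). In particular, when m1 = (c/64)k² and m2 = (c/α^{2+ε})k² for α ∈ (0,1], ε > 0, the right-hand side is less than L·(3 + ln(64/α^{2+ε})). -/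
open Finset Real

lemma pval_anti (L : ℕ) : Antitone (pval L) := by
  intro r r' h
  unfold pval
  apply one_div_le_one_div_of_le
  · positivity
  · have h1 : r / L ≤ r' / L := Nat.div_le_div_right h
    have h2 : ((r / L : ℕ) : ℝ) ≤ ((r' / L : ℕ) : ℝ) := by exact_mod_cast h1
    exact Real.sqrt_le_sqrt (by linarith)

/-- cyclic shift permutation on ℕ supported in `[0, W)`. -/
def cycPerm (W c : ℕ) (hc : c ≤ W) : Equiv.Perm ℕ where
  toFun j := if j < W then (j + c) % W else j
  invFun j := if j < W then (j + (W - c)) % W else j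
  left_inv := by
    intro j
    by_cases hj : j < W
    · have hW : 0 < W := lt_of_le_of_lt (Nat.zero_le _) hj
      simp only []
      rw [if_pos hj, if_pos (Nat.mod_lt _ hW), Nat.mod_add_mod,
        show j + c + (W - c) = j + W by omega, Nat.add_mod_right, Nat.mod_eq_of_lt hj]
    · simp [hj]
  right_inv := by
    intro j
    by_cases hj : j < W
    · have hW : 0 < W := lt_of_le_of_lt (Nat.zero_le _) hj
      simp only []
      rw [if_pos hj, if_pos (Nat.mod_lt _ hW), Nat.mod_add_mod,
        show j + (W - c) + c = j + W by omega, Nat.add_mod_right, Nat.mod_eq_of_lt hj]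
    · simp [hj]

lemma cyclic_rearrange (f g : ℕ → ℝ) (hf : Antitone f) (hg : Antitone g)
    (W c : ℕ) (hc : c ≤ W) :
    ∑ j ∈ range W, f j * g ((j + c) % W) ≤ ∑ j ∈ range W, f j * g j := by
  have hmono : MonovaryOn f g (range W : Finset ℕ) := by
    intro i _ j _ hgij
    rcases le_or_gt i j with h | h
    · exact absurd (hg h) (not_le.mpr hgij)
    · exact hf h.le
  have hsupp : {x | cycPerm W c hc x ≠ x} ⊆ (range W : Finset ℕ) := by
    intro x hx
    simp only [Set.mem_setOf_eq, cycPerm, Equiv.coe_fn_mk] at hx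
    by_cases h : x < W
    · simpa using h
    · simp [h] at hx
  have h := hmono.sum_mul_comp_perm_le_sum_mul hsupp
  refine le_trans (le_of_eq ?_) h
  refine Finset.sum_congr rfl fun j hj => ?_
  simp only [mem_range] at hj
  simp [cycPerm, hj]

lemma sum_block (φ : ℕ → ℝ) (L : ℕ) (K : ℕ) :
    ∑ j ∈ range (K * L), φ (j / L) = (L : ℝ) * ∑ k ∈ range K, φ k := by
  induction K with
  | zero => simp
  | succ K ih =>
    rw [Finset.sum_range_succ, Nat.succ_mul, Finset.range_eq_Ico,
      ← Finset.sum_Ico_consecutive _ (Nat.zero_le (K * L)) (Nat.le_add_right _ L),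
      ← Finset.range_eq_Ico, ih]
    have h2 : ∑ j ∈ Finset.Ico (K * L) (K * L + L), φ (j / L) = (L : ℝ) * φ K := by
      have h3 : ∀ j ∈ Finset.Ico (K * L) (K * L + L), φ (j / L) = φ K := by
        intro j hj
        simp only [Finset.mem_Ico] at hj
        congr 1
        exact Nat.div_eq_of_lt_le hj.1 (by rw [Nat.succ_mul]; exact hj.2)
      rw [Finset.sum_congr rfl h3, Finset.sum_const, Nat.card_Ico]
      simp [mul_comm]
    rw [h2]; ring

lemma step_ineq (A B : ℝ) (hA : 2 ≤ A) (hB : 1 ≤ B) :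
    1 / (Real.sqrt A * Real.sqrt B)
      ≤ 2 * Real.log (Real.sqrt A + Real.sqrt B)
        - 2 * Real.log (Real.sqrt (A - 1) + Real.sqrt (B - 1)) := by
  set a := Real.sqrt A with hadef
  set a' := Real.sqrt (A - 1) with ha'def
  set b := Real.sqrt B with hbdef
  set b' := Real.sqrt (B - 1) with hb'def
  have ha : 0 < a := Real.sqrt_pos.mpr (by linarith)
  have hb : 0 < b := Real.sqrt_pos.mpr (by linarith)
  have ha' : 1 ≤ a' := Real.one_le_sqrt.mpr (by linarith)
  have hb' : 0 ≤ b' := Real.sqrt_nonneg _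
  have ea : a ^ 2 = A := Real.sq_sqrt (by linarith)
  have ea' : a' ^ 2 = A - 1 := Real.sq_sqrt (by linarith)
  have eb : b ^ 2 = B := Real.sq_sqrt (by linarith)
  have eb' : b' ^ 2 = B - 1 := Real.sq_sqrt (by linarith)
  have haa : a' ≤ a := Real.sqrt_le_sqrt (by linarith)
  have hbb : b' ≤ b := Real.sqrt_le_sqrt (by linarith)
  have e1 : (a - a') * (a + a') = 1 := by
    have h : (a - a') * (a + a') = a ^ 2 - a' ^ 2 := by ring
    rw [h, ea, ea']; ring
  have e2 : (b - b') * (b + b') = 1 := by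
    have h : (b - b') * (b + b') = b ^ 2 - b' ^ 2 := by ring
    rw [h, eb, eb']; ring
  have h1 : 1 / (2 * a) ≤ a - a' := by
    rw [div_le_iff₀ (by positivity)]
    nlinarith [mul_self_nonneg (a - a')]
  have h2 : 1 / (2 * b) ≤ b - b' := by
    rw [div_le_iff₀ (by positivity)]
    nlinarith [mul_self_nonneg (b - b')]
  have hab : (0:ℝ) < a + b := by linarith
  have hab' : (0:ℝ) < a' + b' := by linarith
  have step1 : 1 - (a' + b') / (a + b) ≤ Real.log (a + b) - Real.log (a' + b') := by
    have h := Real.log_le_sub_one_of_pos (div_pos hab' hab)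
    rw [Real.log_div hab'.ne' hab.ne'] at h
    linarith
  have step3 : 1 / (2 * (a * b)) ≤ 1 - (a' + b') / (a + b) := by
    have e3 : 1 - (a' + b') / (a + b) = ((a + b) - (a' + b')) / (a + b) := by
      field_simp
    have e4 : 1 / (2 * (a * b)) = ((a + b) / (2 * (a * b))) / (a + b) := by
      field_simp
    rw [e3, e4]
    apply (div_le_div_iff_of_pos_right hab).mpr
    have e5 : (a + b) / (2 * (a * b)) = 1 / (2 * a) + 1 / (2 * b) := by
      field_simp
      ring
    rw [e5]
    linarith
  have hfin : 1 / (a * b) = 2 * (1 / (2 * (a * b))) := by ring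
  linarith

lemma telescope_bound (m1 : ℕ) (hm1 : 1 ≤ m1) (K : ℕ) :
    ∑ k ∈ range K, 1 / (Real.sqrt ((m1 : ℝ) + k + 1) * Real.sqrt ((k : ℝ) + 1))
      ≤ 2 * Real.log (Real.sqrt ((m1 : ℝ) + K) + Real.sqrt (K : ℝ)) - Real.log (m1 : ℝ) := by
  set F : ℕ → ℝ := fun k => 2 * Real.log (Real.sqrt ((m1 : ℝ) + k) + Real.sqrt (k : ℝ)) with hF
  have hm1R : (1:ℝ) ≤ (m1:ℝ) := by exact_mod_cast hm1
  have hstep : ∀ k ∈ range K,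
      1 / (Real.sqrt ((m1 : ℝ) + k + 1) * Real.sqrt ((k : ℝ) + 1)) ≤ F (k+1) - F k := by
    intro k _
    have h := step_ineq ((m1 : ℝ) + k + 1) ((k : ℝ) + 1)
      (by have : (0:ℝ) ≤ (k:ℝ) := Nat.cast_nonneg k; linarith)
      (by have : (0:ℝ) ≤ (k:ℝ) := Nat.cast_nonneg k; linarith)
    have e1 : (m1 : ℝ) + k + 1 - 1 = (m1 : ℝ) + k := by ring
    have e2 : (k : ℝ) + 1 - 1 = (k : ℝ) := by ring
    rw [e1, e2] at h
    have e3 : F (k+1) = 2 * Real.log (Real.sqrt ((m1 : ℝ) + k + 1) + Real.sqrt ((k : ℝ) + 1)) := by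
      simp only [hF]
      push_cast
      ring_nf
    rw [e3, hF]
    linarith [h]
  calc ∑ k ∈ range K, 1 / (Real.sqrt ((m1 : ℝ) + k + 1) * Real.sqrt ((k : ℝ) + 1))
      ≤ ∑ k ∈ range K, (F (k+1) - F k) := Finset.sum_le_sum hstep
    _ = F K - F 0 := Finset.sum_range_sub F K
    _ = 2 * Real.log (Real.sqrt ((m1 : ℝ) + K) + Real.sqrt (K : ℝ)) - Real.log (m1 : ℝ) := by
        simp only [hF]
        congr 1
        rw [Nat.cast_zero, Real.sqrt_zero, add_zero, Real.log_sqrt (by linarith)]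
        ring

/-- Case 1 upper bound: for any integer shift `s`,
`∑_{r=m1·L}^{(m2+1)·L−1} p(r)·p((r+s) mod t) < L·(3 + ln(m2+1) − ln(m1+1))`; and when
`m1 = (c/64)k²`, `m2 = (c/α^{2+ε})k²`, the right-hand side is `< L·(3 + ln(64/α^{2+ε}))`. -/
theorem stmt9 (L : ℕ) (hL : 0 < L) (m1 m2 : ℕ) (hm1 : 0 < m1) (hm12 : m1 < m2)
    (t : ℕ) (ht : (m2 + 1) * L < t) (α ε c : ℝ) (hα0 : 0 < α) (hα1 : α ≤ 1)
    (hε : 0 < ε) (hc : 0 < c) (k : ℕ) (hk : 1 ≤ k) :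
    (∀ s : ℤ,
      ∑ r ∈ Finset.Ico (m1 * L) ((m2 + 1) * L),
          pval L r * pval L ((((r : ℤ) + s) % (t : ℤ)).toNat)
        < (L : ℝ) * (3 + Real.log ((m2 : ℝ) + 1) - Real.log ((m1 : ℝ) + 1))) ∧
    ((m1 : ℝ) = c / 64 * (k : ℝ) ^ 2 →
      (m2 : ℝ) = c / α ^ ((2 : ℝ) + ε) * (k : ℝ) ^ 2 →
      (L : ℝ) * (3 + Real.log ((m2 : ℝ) + 1) - Real.log ((m1 : ℝ) + 1))
        < (L : ℝ) * (3 + Real.log (64 / α ^ ((2 : ℝ) + ε)))) := by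
  have hLR : (0:ℝ) < (L:ℝ) := by exact_mod_cast hL
  have hm1R : (1:ℝ) ≤ (m1:ℝ) := by exact_mod_cast hm1
  constructor
  · -- main sum bound
    intro s
    set a : ℕ := m1 * L with ha
    set W : ℕ := (m2 + 1) * L - m1 * L with hWdef
    have haW : a + W = (m2 + 1) * L := by
      have : m1 * L ≤ (m2 + 1) * L := Nat.mul_le_mul_right _ (by omega)
      omega
    have hWt : W < t := by omega
    have ht0 : (0:ℤ) < (t:ℤ) := by exact_mod_cast lt_of_le_of_lt (Nat.zero_le _) ht
    set s0 : ℕ := (((a : ℤ) + s) % (t : ℤ)).toNat with hs0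
    have hs0cast : ((s0 : ℕ) : ℤ) = ((a : ℤ) + s) % (t : ℤ) :=
      Int.toNat_of_nonneg (Int.emod_nonneg _ ht0.ne')
    have hs0t : s0 < t := by
      have h := Int.emod_lt_of_pos ((a : ℤ) + s) ht0
      rw [← hs0cast] at h
      exact_mod_cast h
    -- rewrite the modular index
    have hT : ∀ j : ℕ, ((((a + j : ℕ) : ℤ) + s) % (t : ℤ)).toNat = (s0 + j) % t := by
      intro j
      have h1 : (((a + j : ℕ) : ℤ) + s) % (t : ℤ) = (((s0 + j) % t : ℕ) : ℤ) := by
        push_cast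
        rw [← Int.emod_emod_of_dvd _ dvd_rfl]
        conv_lhs => rw [show (a : ℤ) + j + s = ((a : ℤ) + s) + j by ring]
        rw [← Int.emod_add_emod, ← hs0cast]
        exact Int.emod_emod_of_dvd _ dvd_rfl
      rw [h1]
      exact Int.toNat_natCast _
    -- reindex sum
    rw [show (m2 + 1) * L = a + W from haW.symm, Finset.sum_Ico_eq_sum_range]
    have hWW : a + W - a = W := by omega
    rw [hWW]
    have hre : ∀ j ∈ range W,
        pval L (a + j) * pval L ((((a + j : ℕ) : ℤ) + s) % (t : ℤ)).toNat
          = pval L (a + j) * pval L ((s0 + j) % t) := by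
      intro j _
      rw [hT j]
    rw [Finset.sum_congr rfl hre]
    -- key comparison with aligned sum
    have key : ∑ j ∈ range W, pval L (a + j) * pval L ((s0 + j) % t)
        ≤ ∑ j ∈ range W, pval L (a + j) * pval L j := by
      by_cases hcase : s0 + W ≤ t
      · apply Finset.sum_le_sum
        intro j hj
        have hmod : (s0 + j) % t = s0 + j := Nat.mod_eq_of_lt (by simp only [mem_range] at hj; omega)
        rw [hmod]
        exact mul_le_mul_of_nonneg_left (pval_anti L (by omega)) (pval_pos L _).le
      · push_neg at hcase
        set d : ℕ := t - s0 with hd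
        set cc : ℕ := W - d with hcc
        have hd1 : 1 ≤ d := by omega
        have hdW : d < W := by omega
        have hstep1 : ∑ j ∈ range W, pval L (a + j) * pval L ((s0 + j) % t)
            ≤ ∑ j ∈ range W, pval L (a + j) * pval L ((j + cc) % W) := by
          apply Finset.sum_le_sum
          intro j hj
          simp only [mem_range] at hj
          have hidx : (j + cc) % W ≤ (s0 + j) % t := by
            by_cases hjd : j < d
            · have h1 : (s0 + j) % t = s0 + j := Nat.mod_eq_of_lt (by omega)
              have h2 : (j + cc) % W = j + cc := Nat.mod_eq_of_lt (by omega)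
              omega
            · have h1 : (s0 + j) % t = s0 + j - t := by
                rw [Nat.mod_eq_sub_mod (by omega), Nat.mod_eq_of_lt (by omega)]
              have h2 : (j + cc) % W = j + cc - W := by
                rw [Nat.mod_eq_sub_mod (by omega), Nat.mod_eq_of_lt (by omega)]
              omega
          exact mul_le_mul_of_nonneg_left (pval_anti L hidx) (pval_pos L _).le
        have hstep2 := cyclic_rearrange (fun j => pval L (a + j)) (pval L)
          (fun i j hij => pval_anti L (by omega)) (pval_anti L) W cc (by omega)
        exact le_trans hstep1 hstep2
    -- compute the aligned sum
    set K : ℕ := m2 + 1 - m1 with hK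
    have hWKL : W = K * L := by
      rw [hWdef, hK, Nat.sub_mul]
    set φ : ℕ → ℝ := fun q => 1 / (Real.sqrt ((m1 : ℝ) + q + 1) * Real.sqrt ((q : ℝ) + 1)) with hφ
    have hptφ : ∀ j : ℕ, pval L (a + j) * pval L j = φ (j / L) := by
      intro j
      have hdiv : (a + j) / L = m1 + j / L := by
        rw [ha, mul_comm, Nat.mul_add_div hL]
      unfold pval
      rw [hdiv, hφ]
      simp only []
      rw [div_mul_div_comm, one_mul]
      congr 2
      push_cast
      ring
    have heval : ∑ j ∈ range W, pval L (a + j) * pval L j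
        = (L : ℝ) * ∑ q ∈ range K, φ q := by
      rw [Finset.sum_congr rfl (fun j _ => hptφ j), hWKL, sum_block]
    -- telescoping bound
    have htel := telescope_bound m1 hm1 K
    have hm1K : (m1 : ℝ) + K = (m2 : ℝ) + 1 := by
      rw [hK]
      push_cast [Nat.cast_sub (by omega : m1 ≤ m2 + 1)]
      ring
    have hKle : Real.sqrt (K : ℝ) ≤ Real.sqrt ((m2 : ℝ) + 1) := by
      apply Real.sqrt_le_sqrt
      have : (K : ℝ) ≤ (m2 : ℝ) + 1 := by
        have : K ≤ m2 + 1 := by omega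
        exact_mod_cast this
      linarith
    have hm2pos : (0:ℝ) < Real.sqrt ((m2 : ℝ) + 1) := Real.sqrt_pos.mpr (by positivity)
    have hlog1 : Real.log (Real.sqrt ((m1 : ℝ) + K) + Real.sqrt (K : ℝ))
        ≤ Real.log (2 * Real.sqrt ((m2 : ℝ) + 1)) := by
      apply Real.log_le_log (by rw [hm1K]; positivity)
      rw [hm1K]
      linarith
    have hlog2 : Real.log (2 * Real.sqrt ((m2 : ℝ) + 1))
        = Real.log 2 + Real.log ((m2 : ℝ) + 1) / 2 := by
      rw [Real.log_mul (by norm_num) hm2pos.ne', Real.log_sqrt (by positivity)]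
    have hlogm1 : Real.log ((m1 : ℝ) + 1) - Real.log (m1 : ℝ) ≤ Real.log 2 := by
      rw [← Real.log_div (by positivity) (by positivity)]
      apply Real.log_le_log (by positivity)
      rw [div_le_iff₀ (by positivity)]
      linarith
    have hlog2lt : Real.log 2 < 1 := by
      have := Real.log_two_lt_d9
      linarith
    -- put everything together
    calc ∑ j ∈ range W, pval L (a + j) * pval L ((s0 + j) % t)
        ≤ (L : ℝ) * ∑ q ∈ range K, φ q := by rw [← heval]; exact key
      _ ≤ (L : ℝ) * (2 * Real.log (Real.sqrt ((m1 : ℝ) + K) + Real.sqrt (K : ℝ))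
            - Real.log (m1 : ℝ)) := by
          apply mul_le_mul_of_nonneg_left htel hLR.le
      _ < (L : ℝ) * (3 + Real.log ((m2 : ℝ) + 1) - Real.log ((m1 : ℝ) + 1)) := by
          apply mul_lt_mul_of_pos_left _ hLR
          have := hlog1
          rw [hlog2] at this
          linarith
  · -- second part
    intro hA hB
    have hE : (0:ℝ) < α ^ ((2:ℝ) + ε) := Real.rpow_pos_of_pos hα0 _
    have hkR : (1:ℝ) ≤ (k:ℝ) := by exact_mod_cast hk
    have hk2 : (0:ℝ) < (k:ℝ) ^ 2 := by positivity
    have hm2R : (m1:ℝ) < (m2:ℝ) := by exact_mod_cast hm12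
    have hm1pos : (0:ℝ) < (m1:ℝ) := by linarith
    have hr : (m2 : ℝ) / (m1 : ℝ) = 64 / α ^ ((2:ℝ) + ε) := by
      rw [hA, hB]
      field_simp
    have hkey : ((m2 : ℝ) + 1) / ((m1 : ℝ) + 1) < 64 / α ^ ((2:ℝ) + ε) := by
      rw [← hr, div_lt_div_iff₀ (by linarith) hm1pos]
      nlinarith
    have hlt : Real.log ((m2 : ℝ) + 1) - Real.log ((m1 : ℝ) + 1)
        < Real.log (64 / α ^ ((2:ℝ) + ε)) := by
      rw [← Real.log_div (by positivity) (by positivity)]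
      exact Real.log_lt_log (by positivity) hkey
    apply mul_lt_mul_of_pos_left _ hLR
    linarith
end

section
/- There is an absolute constant c₀ such that the following holds for all c ≥ c₀. Let n ≥ 2, let α ∈ (0,1] and let k ≥ 2 be an integer with e^{−k} < α, let L ≥ ln n be a positive integer, and suppose m1 := (c/64)k² is a positive integer. Let X_0,…,X_{m1·L − 1} be independent {0,1}-valued random variables with P(X_r = 1) = p(r) = 1/√(⌊r/L⌋+1), and let Y⊤ = ∑_{r=0}^{m1·L − 1} X_r. Then P(Y⊤ > (3/5)·√c·k·L) < (1/c²)·n^{−8·ln(4/α)}. -/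
open MeasureTheory

/-- The Bernoulli measure on `Bool` with parameter `p`. -/
noncomputable def bern (p : ℝ) : Measure Bool :=
  ENNReal.ofReal p • Measure.dirac true + ENNReal.ofReal (1 - p) • Measure.dirac false

/-! `Y⊤` is a sum of independent Bernoulli variables with mean
`∑ p(r) = L · ∑_{b < m1} 1/√(b+1) ≤ 2√m1 · L = √c·k·L/4`. The exponential-moment bound with
`t = log 2` gives `P(Y⊤ ≥ a) ≤ exp(E[Y⊤] - a log 2)`; for `a = (3/5)√c·k·L` the exponent is
below `-√c·k·L/7`, which dominates both `2 log c` and `8 log n · log(4/α) ≤ 8L(3 + k)`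
once `c ≥ 10⁸`. -/

open ProbabilityTheory Real

section Bernoulli

variable {p : ℝ}

lemma isProbabilityMeasure_bern (h0 : 0 ≤ p) (h1 : p ≤ 1) : IsProbabilityMeasure (bern p) := by
  constructor
  simp only [bern, Measure.add_apply, Measure.smul_apply, measure_univ, smul_eq_mul, mul_one]
  rw [← ENNReal.ofReal_add h0 (by linarith), add_sub_cancel, ENNReal.ofReal_one]

lemma integral_bern (h0 : 0 ≤ p) (h1 : p ≤ 1) (f : Bool → ℝ) :
    ∫ b, f b ∂bern p = p * f true + (1 - p) * f false := by
  rw [bern, integral_add_measure (Integrable.of_finite.smul_measure ENNReal.ofReal_ne_top)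
    (Integrable.of_finite.smul_measure ENNReal.ofReal_ne_top), integral_smul_measure,
    integral_smul_measure, integral_dirac, integral_dirac, ENNReal.toReal_ofReal h0,
    ENNReal.toReal_ofReal (by linarith), smul_eq_mul, smul_eq_mul]

end Bernoulli

section Chernoff

variable {ι : Type*} [Fintype ι] {p : ι → ℝ}

lemma mgf_pi_bern_coord_le (h0 : ∀ i, 0 ≤ p i) (h1 : ∀ i, p i ≤ 1) (i : ι) (t : ℝ) :
    mgf (fun ω : ι → Bool => if ω i = true then (1 : ℝ) else 0)
      (Measure.pi fun j => bern (p j)) t ≤ exp ((exp t - 1) * p i) := by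
  have := fun j => isProbabilityMeasure_bern (h0 j) (h1 j)
  calc ∫ ω, exp (t * if ω i = true then 1 else 0) ∂(Measure.pi fun j => bern (p j))
      = ∫ b, exp (t * if b = true then 1 else 0) ∂bern (p i) :=
        integral_comp_eval (X := fun _ => Bool) (μ := fun j => bern (p j)) (i := i)
          (f := fun b => exp (t * if b = true then 1 else 0))
          Measurable.of_discrete.aestronglyMeasurable
    _ ≤ _ := ?_
  rw [integral_bern (h0 i) (h1 i)]
  simp only [Bool.false_eq_true, if_true, if_false, mul_one, mul_zero, exp_zero]
  linarith [add_one_le_exp ((exp t - 1) * p i)]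

theorem measure_pi_bern_sum_ge_le (h0 : ∀ i, 0 ≤ p i) (h1 : ∀ i, p i ≤ 1) {t : ℝ} (ht : 0 ≤ t)
    (a : ℝ) :
    Measure.pi (fun i => bern (p i)) {ω | a ≤ ∑ i, if ω i = true then (1 : ℝ) else 0}
      ≤ ENNReal.ofReal (exp (-t * a + (exp t - 1) * ∑ i, p i)) := by
  have := fun i => isProbabilityMeasure_bern (h0 i) (h1 i)
  set X : ι → (ι → Bool) → ℝ := fun i ω => if ω i = true then 1 else 0
  have hX : iIndepFun X (Measure.pi fun i => bern (p i)) :=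
    iIndepFun_pi (X := fun _ b => if b = true then (1 : ℝ) else 0) fun _ => by fun_prop
  have hsum : ∀ ω : ι → Bool, (∑ i, if ω i = true then (1 : ℝ) else 0) = (∑ i, X i) ω :=
    fun ω => by simp [X]
  rw [← ofReal_measureReal]
  simp only [hsum]
  rw [exp_add, Finset.mul_sum, exp_sum]
  gcongr
  calc _ ≤ exp (-t * a) * mgf (∑ i, X i) (Measure.pi fun i => bern (p i)) t :=
        measure_ge_le_exp_mul_mgf a ht .of_finite
    _ ≤ _ := by
      rw [hX.mgf_sum (fun i => by fun_prop)]
      gcongr with i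
      · exact fun i _ => mgf_nonneg
      · exact mgf_pi_bern_coord_le h0 h1 i t

end Chernoff

lemma pval_nonneg (L r : ℕ) : 0 ≤ pval L r := by
  unfold pval
  positivity

lemma pval_le_one (L r : ℕ) : pval L r ≤ 1 := by
  rw [pval, div_le_one (by positivity)]
  exact one_le_sqrt.mpr (by linarith [(Nat.cast_nonneg _ : (0 : ℝ) ≤ ((r / L : ℕ) : ℝ))])

lemma sum_range_pval (L m : ℕ) :
    ∑ r ∈ Finset.range (m * L), pval L r = L * ∑ b ∈ Finset.range m, 1 / √((b : ℝ) + 1) := by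
  rcases Nat.eq_zero_or_pos L with rfl | hL
  · simp
  induction m with
  | zero => simp
  | succ m ih =>
    have hblock : ∀ x ∈ Finset.range L, pval L (m * L + x) = 1 / √((m : ℝ) + 1) := by
      intro x hx
      rw [pval, Nat.add_comm, Nat.add_mul_div_right _ _ hL,
        Nat.div_eq_of_lt (Finset.mem_range.mp hx), zero_add]
    rw [Nat.succ_mul, Finset.sum_range_add, ih, Finset.sum_congr rfl hblock,
      Finset.sum_range_succ]
    simp only [Finset.sum_const, Finset.card_range, nsmul_eq_mul]
    ring

lemma sum_range_one_div_sqrt_succ_le (m : ℕ) :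
    ∑ b ∈ Finset.range m, 1 / √((b : ℝ) + 1) ≤ 2 * √m := by
  induction m with
  | zero => simp
  | succ m ih =>
    rw [Finset.sum_range_succ, Nat.cast_succ]
    -- `2 (y - x) y - (y² - x²) = (y - x)²` with `y = √(m+1)`, `x = √m`
    have hstep : 1 / √((m : ℝ) + 1) ≤ 2 * (√((m : ℝ) + 1) - √m) := by
      have hpos : 0 < √((m : ℝ) + 1) := by positivity
      rw [div_le_iff₀ hpos]
      nlinarith [mul_self_sqrt (by positivity : (0 : ℝ) ≤ m + 1),
        mul_self_sqrt (Nat.cast_nonneg m : (0 : ℝ) ≤ m), sq_nonneg (√((m : ℝ) + 1) - √m)]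
    linarith

lemma log_le_div_fifty {s : ℝ} (hs : 10 ^ 4 ≤ s) : log s ≤ s / 50 := by
  have hlog : log s ≤ 2 * √s := by
    have := log_le_rpow_div (by linarith : 0 ≤ s) (by norm_num : (0 : ℝ) < 1 / 2)
    rwa [← sqrt_eq_rpow, div_eq_mul_inv, mul_comm, inv_div, div_one] at this
  have h100 : 100 ≤ √s := le_sqrt_of_sq_le (by linarith)
  nlinarith [mul_self_sqrt (by linarith : 0 ≤ s)]

lemma log_four_div_lt {α k : ℝ} (hα : 0 < α) (hαk : exp (-k) < α) : log (4 / α) < 3 + k := by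
  have hlogα : -k < log α := (lt_log_iff_exp_lt hα).mpr hαk
  have hlog4 : log 4 ≤ 3 := by linarith [log_le_sub_one_of_pos (by norm_num : (0 : ℝ) < 4)]
  rw [log_div (by norm_num) hα.ne']
  linarith

lemma chernoff_exponent_lt {s k L ℓn ℓα : ℝ} (hs : 10 ^ 4 ≤ s) (hk : 2 ≤ k) (hL : 1 ≤ L)
    (hℓn0 : 0 ≤ ℓn) (hℓnL : ℓn ≤ L) (hℓα : ℓα < 3 + k) :
    s * k * L / 4 - log 2 * (3 / 5 * (s * k * L)) < -(4 * log s) - 8 * ℓn * ℓα := by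
  have hkL : 2 ≤ k * L := by nlinarith
  have hx : 2 * s ≤ s * k * L := by nlinarith
  have hlogs : 4 * log s ≤ s * k * L / 25 := by linarith [log_le_div_fifty hs]
  have hlogn : ℓn * ℓα ≤ L * (3 + k) := by nlinarith
  have hkLx : 10 ^ 4 * (k * L) ≤ s * k * L := by nlinarith
  have hlog2 := log_two_gt_d9
  nlinarith

/-- Chernoff-type upper-tail bound on the weight `Y⊤` of the upper segment
`[0, m1·L)` of a random column: there is an absolute constant `c₀` such that for all
`c ≥ c₀`, `P(Y⊤ > (3/5)·√c·k·L) < (1/c²)·n^{−8·ln(4/α)}`, where the coordinates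
`X_0, …, X_{m1·L−1}` are independent Bernoulli(`p(r)`) variables. -/
theorem stmt11 :
    ∃ c₀ : ℝ, ∀ c : ℝ, c₀ ≤ c →
      ∀ n : ℕ, 2 ≤ n → ∀ α : ℝ, 0 < α → α ≤ 1 →
        ∀ k : ℕ, 2 ≤ k → Real.exp (-(k : ℝ)) < α →
          ∀ L : ℕ, 0 < L → Real.log n ≤ (L : ℝ) →
            ∀ m1 : ℕ, 0 < m1 → (m1 : ℝ) = c / 64 * (k : ℝ) ^ 2 →
              (Measure.pi fun r : Fin (m1 * L) => bern (pval L r.val))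
                  {ω : Fin (m1 * L) → Bool |
                    (3 / 5 : ℝ) * Real.sqrt c * (k : ℝ) * (L : ℝ)
                      < ∑ r : Fin (m1 * L), (if ω r = true then (1 : ℝ) else 0)}
                < ENNReal.ofReal
                    (1 / c ^ 2 * (n : ℝ) ^ (-(8 * Real.log (4 / α)))) := by
  refine ⟨10 ^ 8, fun c hc n hn α hα0 _ k hk hαk L hL hLn m1 _ hm1 => ?_⟩
  set s := √c
  have hs : 10 ^ 4 ≤ s := le_sqrt_of_sq_le (by linarith)
  have hcs : c = s ^ 2 := (sq_sqrt (by linarith)).symm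
  have hn0 : (0 : ℝ) < n := by positivity
  have hmean : ∑ r : Fin (m1 * L), pval L r ≤ s * k * L / 4 := by
    have hsqrt_m1 : √(m1 : ℝ) = s / 8 * k := by
      rw [hm1, hcs, show s ^ 2 / 64 * (k : ℝ) ^ 2 = (s / 8 * k) ^ 2 by ring]
      exact sqrt_sq (by positivity)
    rw [Fin.sum_univ_eq_sum_range (pval L), sum_range_pval L m1]
    calc (L : ℝ) * ∑ b ∈ Finset.range m1, 1 / √((b : ℝ) + 1) ≤ L * (2 * √(m1 : ℝ)) := by
          gcongr; exact sum_range_one_div_sqrt_succ_le m1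
      _ = s * k * L / 4 := by rw [hsqrt_m1]; ring
  calc _ ≤ Measure.pi (fun r : Fin (m1 * L) => bern (pval L r.val))
        {ω | 3 / 5 * s * k * L ≤ ∑ r : Fin (m1 * L), (if ω r = true then (1 : ℝ) else 0)} :=
        measure_mono <| Set.ofPred_subset_ofPred.mpr fun _ => le_of_lt
    _ ≤ ENNReal.ofReal (exp (-log 2 * (3 / 5 * s * k * L)
          + (exp (log 2) - 1) * ∑ r : Fin (m1 * L), pval L r)) :=
        measure_pi_bern_sum_ge_le (p := fun r : Fin (m1 * L) => pval L r.val)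
          (fun r => pval_nonneg L r.val) (fun r => pval_le_one L r.val) (log_nonneg one_le_two) _
    _ < _ := by
      rw [ENNReal.ofReal_lt_ofReal_iff (by positivity), rpow_def_of_pos hn0, hcs, one_div,
        ← pow_mul, ← exp_log (by positivity : 0 < s ^ (2 * 2)), ← exp_neg, ← exp_add, exp_lt_exp,
        log_pow, exp_log two_pos]
      have hexponent := chernoff_exponent_lt hs (by exact_mod_cast hk) (by exact_mod_cast hL)
        (log_nonneg (Nat.one_le_cast.mpr (by omega))) hLn (log_four_div_lt hα0 hαk)
      push_cast
      linarith
end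

section
/- Let M be a t×n binary matrix satisfying the classic (k, n)-superimposed code property: for every k-tuple of distinct columns of M and every column c of the tuple, there is a row 0 ≤ i < t where c has a 1 while all remaining k−1 columns of the tuple have a 0. Define the interleaved 2t×n matrix M′ by letting row 2i of M′ equal row i of M and row 2i+1 of M′ be all zeros, for every 0 ≤ i < t. Then M′ satisfies the isolation property I′: for every k-tuple of distinct columns of M′ and every column c of the tuple, there exists a row 0 ≤ i < 2t such that c has a 1 at row i while all other k−1 columns of the tuple have 0 at rows (i−1) mod 2t, i, and (i+1) mod 2t. -/
/-- The interleaved `2t × n` matrix `M′`: row `2i` of `M′` equals row `i` of `M`, and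
row `2i+1` of `M′` is all zeros. -/
def interleave {n : ℕ} (M : Fin n → ℕ → Bool) : Fin n → ℕ → Bool :=
  fun c j => if j % 2 = 0 then M c (j / 2) else false

/-- If `M` is a classic `(k, n)`-superimposed code with `t` rows, then the interleaved
`2t × n` matrix `M′` satisfies the isolation property `I′`: for every `k`-tuple of
distinct columns and every column `c` of the tuple there is a row `0 ≤ i < 2t` where
`c` has a `1` while all other columns of the tuple have `0` at rows `(i−1) mod 2t`,
`i`, and `(i+1) mod 2t`. -/
theorem stmt17 (t n k : ℕ) (M : Fin n → ℕ → Bool)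
    (hM : ∀ S : Finset (Fin n), S.card = k → ∀ c ∈ S,
      ∃ i : ℕ, i < t ∧ M c i = true ∧ ∀ c' ∈ S, c' ≠ c → M c' i = false) :
    ∀ S : Finset (Fin n), S.card = k → ∀ c ∈ S,
      ∃ i : ℕ, i < 2 * t ∧ interleave M c i = true ∧
        ∀ c' ∈ S, c' ≠ c →
          interleave M c' ((i + (2 * t - 1)) % (2 * t)) = false ∧
          interleave M c' i = false ∧
          interleave M c' ((i + 1) % (2 * t)) = false := by
  intro S hS c hc
  obtain ⟨i, hit, hci, hrest⟩ := hM S hS c hc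
  refine ⟨2 * i, by omega, ?_, ?_⟩
  · simp [interleave, Nat.mul_div_cancel_left, hci]
  · intro c' hc' hne
    refine ⟨?_, ?_, ?_⟩
    · simp only [interleave]
      rw [Nat.mod_mod_of_dvd _ ⟨t, rfl⟩]
      rw [if_neg (by omega)]
    · simp [interleave, Nat.mul_div_cancel_left, hrest c' hc' hne]
    · simp only [interleave]
      rw [Nat.mod_mod_of_dvd _ ⟨t, rfl⟩]
      rw [if_neg (by omega)]
end

section
/- Let n ≥ 2 and ℓ = ⌈log₂ n⌉. For v ∈ {1,…,n}, define the block ID b_v as the binary string of length 7 + 2ℓ whose first seven bits are 1,1,1,0,0,0,1 and whose remaining 2ℓ bits are obtained from the ℓ-bit binary representation of v by replacing each bit 0 with the pair 01 and each bit 1 with the pair 10. Then for every v ∈ {1,…,n} and every index j with 5 ≤ j ≤ (7+2ℓ) − 2, at least one of the bits b_v[j], b_v[j+1], b_v[j+2] equals 1; that is, every window of three consecutive positions of b_v starting at position 5 or later contains a 1. -/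
/-- The block ID of `v` with parameter `ℓ`: a binary string of length `7 + 2ℓ`
(positions indexed from `1`) starting with the seven bits `1,1,1,0,0,0,1`, followed,
for `j = 1, …, ℓ`, by the pair `10` (at positions `7+2j−1`, `7+2j`) if the `j`-th bit
(from the most significant) of the `ℓ`-bit binary representation of `v` is `1`, and by
the pair `01` if it is `0`.  Positions outside `[1, 7+2ℓ]` are `0`. -/
def blockID (ℓ v : ℕ) : ℕ → Bool := fun j =>
  if j = 1 ∨ j = 2 ∨ j = 3 then true
  else if j = 4 ∨ j = 5 ∨ j = 6 then false
  else if j = 7 then true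
  else if 8 ≤ j ∧ j ≤ 7 + 2 * ℓ then
    (if (j - 7) % 2 = 1 then v.testBit (ℓ - (j - 6) / 2)
     else !v.testBit (ℓ - (j - 6) / 2))
  else false

lemma blockID_mid (ℓ v k : ℕ) (h1 : 8 ≤ k) (h2 : k ≤ 7 + 2 * ℓ) :
    blockID ℓ v k =
      (if (k - 7) % 2 = 1 then v.testBit (ℓ - (k - 6) / 2)
       else !v.testBit (ℓ - (k - 6) / 2)) := by
  unfold blockID
  rw [if_neg (by omega), if_neg (by omega), if_neg (by omega), if_pos ⟨h1, h2⟩]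

/-- For `n ≥ 2`, `ℓ = ⌈log₂ n⌉` and `v ∈ {1, …, n}`: every window of three consecutive
positions of the block ID `b_v` starting at position `5` or later (and ending within
the block ID) contains a `1`. -/
theorem stmt19 (n : ℕ) (hn : 2 ≤ n) (v : ℕ) (hv1 : 1 ≤ v) (hvn : v ≤ n)
    (j : ℕ) (hj5 : 5 ≤ j) (hj : j ≤ 7 + 2 * Nat.clog 2 n - 2) :
    blockID (Nat.clog 2 n) v j = true ∨ blockID (Nat.clog 2 n) v (j + 1) = true ∨
      blockID (Nat.clog 2 n) v (j + 2) = true := by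
  set ℓ := Nat.clog 2 n with hℓ
  have hℓ1 : 1 ≤ ℓ := Nat.clog_pos (by norm_num) (by omega)
  have hjub : j ≤ 5 + 2 * ℓ := by omega
  by_cases h7 : j ≤ 7
  · interval_cases j <;> simp [blockID]
  · push_neg at h7
    by_cases hpar : (j - 7) % 2 = 1
    · -- positions j, j+1 form a pair
      by_cases hv : v.testBit (ℓ - (j - 6) / 2) = true
      · left
        rw [blockID_mid ℓ v j (by omega) (by omega), if_pos hpar]
        exact hv
      · right; left
        rw [blockID_mid ℓ v (j+1) (by omega) (by omega), if_neg (by omega)]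
        have he : (j + 1 - 6) / 2 = (j - 6) / 2 := by omega
        rw [he]
        simp [Bool.not_eq_true] at hv
        simp [hv]
    · -- positions j+1, j+2 form a pair
      by_cases hv : v.testBit (ℓ - (j + 1 - 6) / 2) = true
      · right; left
        rw [blockID_mid ℓ v (j+1) (by omega) (by omega), if_pos (by omega)]
        exact hv
      · right; right
        rw [blockID_mid ℓ v (j+2) (by omega) (by omega), if_neg (by omega)]
        have he : (j + 2 - 6) / 2 = (j + 1 - 6) / 2 := by omega
        rw [he]
        simp [Bool.not_eq_true] at hv
        simp [hv]
end
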